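/- arXiv:2207.13802 — 2 statements merged into one kernel-verified Lean document; each statement's English description precedes it below -/
import Mathlib

section
/- With L and e as in the randomized scrambling scheme (diagonal of L uniform on nonzero elements of Z_b, other entries of L and all entries of e uniform on Z_b, all independent), if two fixed digit vectors y and y' satisfy y_h = y'_h for h < k and y_k ≠ y'_k, then the pair (x_k, x'_k) of k-th digits of x = Ly + e and x' = Ly' + e is uniformly distributed on {(u,v) ∈ Z_b² : u ≠ v}. -/
open Finset

/-!
Since `y` and `y'` agree below `k`, the strictly-lower entries of `L` shift `x_k` and `x'_k` by the
same amount `t`. Then `x_k - x'_k = l_{kk} (y_k - y'_k)` pins the diagonal entry to the nonzero value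
`(u - v) / (y_k - y'_k)`, after which `x_k = u` pins `e_k`; the strictly-lower entries stay free.
So every pair `(u, v)` with `u ≠ v` is hit by exactly `b ^ k` of the `(b - 1) b ^ k b` outcomes.
-/

section ScrambledPair

variable {F : Type*} [Field F]

theorem scrambled_pair_eq_iff {a a' t u v : F} (ha : a ≠ a') (l e : F) :
    (l * a + t + e = u ∧ l * a' + t + e = v) ↔
      l = (u - v) / (a - a') ∧ e = u - (u - v) / (a - a') * a - t := by
  have ha' : a - a' ≠ 0 := sub_ne_zero.mpr ha
  constructor
  · rintro ⟨hu, hv⟩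
    have hl : l = (u - v) / (a - a') := by
      rw [eq_div_iff ha']
      linear_combination hu - hv
    exact ⟨hl, by subst hl; linear_combination hu⟩
  · rintro ⟨rfl, rfl⟩
    constructor
    · ring
    · field_simp
      ring

def scrambledPairFiberEquiv {C : Type*} (s : C → F) {a a' u v : F} (ha : a ≠ a') (huv : u ≠ v) :
    {ω : {l : F // l ≠ 0} × C × F //
        ω.1 * a + s ω.2.1 + ω.2.2 = u ∧ ω.1 * a' + s ω.2.1 + ω.2.2 = v} ≃ C where
  toFun ω := ω.1.2.1
  invFun c :=
    ⟨(⟨(u - v) / (a - a'), div_ne_zero (sub_ne_zero.mpr huv) (sub_ne_zero.mpr ha)⟩, c,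
        u - (u - v) / (a - a') * a - s c),
      (scrambled_pair_eq_iff ha _ _).mpr ⟨rfl, rfl⟩⟩
  left_inv := by
    rintro ⟨⟨l, c, e⟩, hω⟩
    obtain ⟨hl, he⟩ := (scrambled_pair_eq_iff ha _ _).mp hω
    ext
    · exact hl.symm
    · rfl
    · exact he.symm
  right_inv _ := rfl

theorem card_scrambledPair_mul [Fintype F] [DecidableEq F] {C : Type*} [Fintype C] (s : C → F)
    {a a' u v : F} (ha : a ≠ a') (huv : u ≠ v) :
    #{ω : {l : F // l ≠ 0} × C × F |
        ω.1 * a + s ω.2.1 + ω.2.2 = u ∧ ω.1 * a' + s ω.2.1 + ω.2.2 = v} *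
        (Fintype.card F * (Fintype.card F - 1)) =
      Fintype.card ({l : F // l ≠ 0} × C × F) := by
  have hfiber := (Fintype.card_subtype _).symm.trans
    (Fintype.card_congr (scrambledPairFiberEquiv s ha huv))
  have hunits : Fintype.card {l : F // l ≠ 0} = Fintype.card F - 1 :=
    (Fintype.card_congr unitsEquivNeZero).symm.trans (Fintype.card_units F)
  rw [hfiber, Fintype.card_prod, Fintype.card_prod, hunits]
  ring

end ScrambledPair

/-- If `y` and `y'` agree in digits `h < k` and differ in digit `k`, then under
the random scrambling (diagonal entry of `L` uniform on nonzero elements of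
`Z_b`, strictly-lower entries of `L` and `e_k` uniform on `Z_b`, all
independent) the pair `(x_k, x'_k)` of scrambled `k`-th digits is uniformly
distributed on `{(u,v) ∈ Z_b² : u ≠ v}`: each such pair occurs with probability
`1/(b(b-1))`. -/
theorem scrambled_digit_pair_uniform (b : ℕ) [Fact (Nat.Prime b)]
    (k : ℕ) (y y' : ℕ → ZMod b)
    (hagree : ∀ h, h < k → y h = y' h) (hdiff : y k ≠ y' k)
    (u v : ZMod b) (huv : u ≠ v) :
    (Finset.univ.filter
        (fun ω : {l : ZMod b // l ≠ 0} × (Fin k → ZMod b) × ZMod b =>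
          (ω.1 : ZMod b) * y k + (∑ h : Fin k, ω.2.1 h * y h) + ω.2.2 = u ∧
          (ω.1 : ZMod b) * y' k + (∑ h : Fin k, ω.2.1 h * y' h) + ω.2.2 = v)).card
        * (b * (b - 1)) =
      Fintype.card ({l : ZMod b // l ≠ 0} × (Fin k → ZMod b) × ZMod b) := by
  have hshift (c : Fin k → ZMod b) : ∑ h : Fin k, c h * y' h = ∑ h : Fin k, c h * y h :=
    Finset.sum_congr rfl fun h _ => by rw [hagree h h.isLt]
  simp only [hshift]
  simpa only [ZMod.card] using
    card_scrambledPair_mul (fun c : Fin k → ZMod b => ∑ h : Fin k, c h * y h) hdiff huv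
end

section
/- Multiplying each generator matrix on the left by a nonsingular lower triangular matrix preserves the linear-independence (t-value) condition: let b be prime and C_1, …, C_s be ∞×∞ matrices over Z_b satisfying the (t,m)-condition that for all nonnegative d_1+⋯+d_s = m−t, the row vectors c_{jmk} (first m columns of row k of C_j) for k = 1,…,d_j, j = 1,…,s, are linearly independent over Z_b. If L_1, …, L_s are nonsingular lower triangular matrices over Z_b, then the matrices L_1 C_1, …, L_s C_s satisfy the same (t,m)-condition. -/
/-!
Within each block `j`, row `k` of `L_j C_j` is a combination of rows `0, …, k` of `C_j` whose
coefficient on row `k` is a unit, so solving for row `k` by induction on `k` shows that the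
scrambled rows span the same space as the original ones. A finite family is linearly independent
exactly when the dimension of its span equals its size, so independence carries over.
-/

open Finset Submodule

theorem LinearIndependent.of_span_range_eq {R M ι : Type*} [Ring R] [Nontrivial R]
    [OrzechProperty R] [AddCommGroup M] [Module R M] [Fintype ι] {v w : ι → M}
    (hv : LinearIndependent R v) (h : span R (Set.range w) = span R (Set.range v)) :
    LinearIndependent R w := by
  rw [linearIndependent_iff_card_eq_finrank_span] at hv ⊢
  rw [hv, Set.finrank, Set.finrank, h]

section LowerTriangular

variable {K V ι : Type*} [DivisionRing K] [AddCommGroup V] [Module K V]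

theorem mem_span_lowerTriangular_combination {d : ι → ℕ} (a : ι → ℕ → ℕ → K)
    (ha : ∀ j k, a j k k ≠ 0) (v : ι → ℕ → V) (j : ι) {k : ℕ} (hk : k < d j) :
    v j k ∈ span K (Set.range fun p : Σ j, Fin (d j) =>
      ∑ h ∈ range (p.2 + 1), a p.1 p.2 h • v p.1 h) := by
  induction k using Nat.strong_induction_on with
  | _ k ih =>
    set W := span K (Set.range fun p : Σ j, Fin (d j) =>
      ∑ h ∈ range (p.2 + 1), a p.1 p.2 h • v p.1 h)
    have hrow : ∑ h ∈ range (k + 1), a j k h • v j h ∈ W := subset_span ⟨⟨j, ⟨k, hk⟩⟩, rfl⟩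
    have hlower : ∑ h ∈ range k, a j k h • v j h ∈ W :=
      sum_mem fun h hh => smul_mem _ _ (ih h (mem_range.mp hh) ((mem_range.mp hh).trans hk))
    have hdiag : v j k = (a j k k)⁻¹ • (∑ h ∈ range (k + 1), a j k h • v j h -
        ∑ h ∈ range k, a j k h • v j h) := by
      rw [sum_range_succ, add_sub_cancel_left, smul_smul, inv_mul_cancel₀ (ha j k), one_smul]
    rw [hdiag]
    exact smul_mem _ _ (sub_mem hrow hlower)

theorem span_lowerTriangular_combination_eq {d : ι → ℕ} (a : ι → ℕ → ℕ → K)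
    (ha : ∀ j k, a j k k ≠ 0) (v : ι → ℕ → V) :
    span K (Set.range fun p : Σ j, Fin (d j) => ∑ h ∈ range (p.2 + 1), a p.1 p.2 h • v p.1 h) =
      span K (Set.range fun p : Σ j, Fin (d j) => v p.1 p.2) := by
  apply le_antisymm
  · refine span_le.mpr ?_
    rintro _ ⟨⟨j, k⟩, rfl⟩
    exact sum_mem fun h hh => smul_mem _ _
      (subset_span ⟨⟨j, ⟨h, (Nat.lt_succ_iff.mp (mem_range.mp hh)).trans_lt k.2⟩⟩, rfl⟩)
  · refine span_le.mpr ?_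
    rintro _ ⟨⟨j, k⟩, rfl⟩
    exact mem_span_lowerTriangular_combination a ha v j k.2

end LowerTriangular

/-- `C j h c` is the entry of the generator matrix `C_j` in row `h`, column `c`
(rows and columns indexed from `0`); `c_{jmk}` is the vector of the first `m`
entries of row `k`. -/
theorem scrambling_preserves_t_condition_general (b : ℕ) [Fact (Nat.Prime b)]
    (s m t : ℕ)
    (C : Fin s → ℕ → ℕ → ZMod b)
    (L : Fin s → ℕ → ℕ → ZMod b)
    (hLdiag : ∀ j k, L j k k ≠ 0)
    (hC : ∀ d : Fin s → ℕ, (∑ j, d j) = m - t →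
      LinearIndependent (ZMod b)
        (fun p : (Σ j : Fin s, Fin (d j)) => fun c : Fin m => C p.1 (p.2 : ℕ) (c : ℕ))) :
    ∀ d : Fin s → ℕ, (∑ j, d j) = m - t →
      LinearIndependent (ZMod b)
        (fun p : (Σ j : Fin s, Fin (d j)) => fun c : Fin m =>
          ∑ h ∈ Finset.range ((p.2 : ℕ) + 1), L p.1 (p.2 : ℕ) h * C p.1 h (c : ℕ)) := by
  intro d hd
  let row : Fin s → ℕ → Fin m → ZMod b := fun j h c => C j h c
  have hscrambled : (fun p : (Σ j : Fin s, Fin (d j)) => fun c : Fin m =>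
      ∑ h ∈ range ((p.2 : ℕ) + 1), L p.1 p.2 h * C p.1 h c) =
        fun p => ∑ h ∈ range ((p.2 : ℕ) + 1), L p.1 p.2 h • row p.1 h := by
    ext p c
    simp only [row, Finset.sum_apply, Pi.smul_apply, smul_eq_mul]
  rw [hscrambled]
  exact (hC d hd).of_span_range_eq (span_lowerTriangular_combination_eq L hLdiag row)

/-- Left multiplication of the generator matrices by nonsingular lower
triangular matrices preserves the linear-independence `(t,m)`-condition.
`C j h c` is the entry of the generator matrix `C_j` in row `h`, column `c`
(rows and columns indexed from `0`); `c_{jmk}` is the vector of the first `m`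
entries of row `k`. -/
theorem scrambling_preserves_t_condition (b : ℕ) [Fact (Nat.Prime b)]
    (s m t : ℕ) (ht : t ≤ m)
    (C : Fin s → ℕ → ℕ → ZMod b)
    (L : Fin s → ℕ → ℕ → ZMod b)
    (hLtri : ∀ j h k, h < k → L j h k = 0)
    (hLdiag : ∀ j k, L j k k ≠ 0)
    (hC : ∀ d : Fin s → ℕ, (∑ j, d j) = m - t →
      LinearIndependent (ZMod b)
        (fun p : (Σ j : Fin s, Fin (d j)) => fun c : Fin m => C p.1 (p.2 : ℕ) (c : ℕ))) :
    ∀ d : Fin s → ℕ, (∑ j, d j) = m - t →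
      LinearIndependent (ZMod b)
        (fun p : (Σ j : Fin s, Fin (d j)) => fun c : Fin m =>
          ∑ h ∈ Finset.range ((p.2 : ℕ) + 1), L p.1 (p.2 : ℕ) h * C p.1 h (c : ℕ)) :=
  scrambling_preserves_t_condition_general b s m t C L hLdiag hC
end
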